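/- There exists a factorizable Boolean sublattice that is an LFS but not a UFS; namely, the Boolean sublattice S generated by the five sets {1,2,3}, {4,5,6}, {1,4}, {2,5}, {3,6} is factorizable with A(S) = {{1,2,3}, {4,5,6}, {1,4}, {2,5}, {3,6}}, every nonempty element of S other than {1,2,3,4,5,6} has a unique factorization, and {1,2,3,4,5,6} has exactly two factorizations, {{1,2,3},{4,5,6}} of length 2 and {{1,4},{2,5},{3,6}} of length 3; hence S is an LFS that is not a UFS. -/
import Mathlib


open scoped ENNReal

/-- A Boolean sublattice: a set of finite subsets of `ℕ` that contains `∅` and is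
closed under binary unions (ordered by inclusion, with joins given by unions). -/
def IsBSL (S : Set (Finset ℕ)) : Prop :=
  ∅ ∈ S ∧ ∀ A ∈ S, ∀ B ∈ S, A ∪ B ∈ S

/-- A quark of `S`: a nonempty element of `S` covering `∅` in `S`, i.e. there is no
`B ∈ S` with `∅ ⊊ B ⊊ A`. -/
def IsQuark (S : Set (Finset ℕ)) (A : Finset ℕ) : Prop :=
  A ∈ S ∧ A ≠ ∅ ∧ ∀ B ∈ S, B ≠ ∅ → ¬ B ⊂ A

/-- `z` is a factorization of `X` into quarks of `S`: a finite set of quarks whose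
union is `X` such that no proper subset of `z` has union `X`. -/
def IsFactorization (S : Set (Finset ℕ)) (X : Finset ℕ) (z : Finset (Finset ℕ)) : Prop :=
  (∀ A ∈ z, IsQuark S A) ∧ z.sup id = X ∧ ∀ w, w ⊂ z → w.sup id ≠ X

/-- The set `Z(X)` of factorizations of `X` in `S`. -/
def Factorizations (S : Set (Finset ℕ)) (X : Finset ℕ) : Set (Finset (Finset ℕ)) :=
  {z | IsFactorization S X z}

/-- `S` is factorizable: every nonempty element of `S` has a factorization. -/
def Factorizable (S : Set (Finset ℕ)) : Prop :=
  ∀ X ∈ S, X ≠ ∅ → (Factorizations S X).Nonempty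

/-- `S` is a unique factorization semilattice: every nonempty element of `S` has
exactly one factorization. -/
def IsUFS (S : Set (Finset ℕ)) : Prop :=
  ∀ X ∈ S, X ≠ ∅ → ∃! z, z ∈ Factorizations S X

/-- `S` is a half-factorial semilattice: for every nonempty `X ∈ S` the set of
factorization lengths of `X` is a singleton. -/
def IsHFS (S : Set (Finset ℕ)) : Prop :=
  ∀ X ∈ S, X ≠ ∅ → (Factorizations S X).Nonempty ∧
    ∀ z ∈ Factorizations S X, ∀ z' ∈ Factorizations S X, z.card = z'.card

/-- `S` is a length-factorial semilattice: two distinct factorizations of the same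
nonempty element of `S` have different cardinalities. -/
def IsLFS (S : Set (Finset ℕ)) : Prop :=
  ∀ X ∈ S, X ≠ ∅ → ∀ z ∈ Factorizations S X, ∀ z' ∈ Factorizations S X,
    z.card = z'.card → z = z'

/-- The Boolean sublattice generated by a collection `𝒜` of finite subsets of `ℕ`:
the smallest set of finite subsets of `ℕ` containing `{∅} ∪ 𝒜` and closed under
binary unions. -/
def genBSL (𝒜 : Set (Finset ℕ)) : Set (Finset ℕ) :=
  ⋂₀ {T | IsBSL T ∧ 𝒜 ⊆ T}

/-- An isolated quark: a quark disjoint from every other quark of `S`. -/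
def IsIsolatedQuark (S : Set (Finset ℕ)) (A : Finset ℕ) : Prop :=
  IsQuark S A ∧ ∀ B, IsQuark S B → B ≠ A → Disjoint A B

/-- An excess quark: a quark each of whose elements belongs to some other quark. -/
def IsExcessQuark (S : Set (Finset ℕ)) (A : Finset ℕ) : Prop :=
  IsQuark S A ∧ ∀ j ∈ A, ∃ B, IsQuark S B ∧ B ≠ A ∧ j ∈ B

/-- The quarkic graph of `S`: vertices are the quarks of `S`, with an edge between
distinct quarks having nonempty intersection. -/
def quarkicGraph (S : Set (Finset ℕ)) : SimpleGraph {A : Finset ℕ // IsQuark S A} :=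
  SimpleGraph.fromRel (fun A B => ((A : Finset ℕ) ∩ (B : Finset ℕ)).Nonempty)

/-- The vertex set `V(C)` of a connected component of the quarkic graph, as a set of
finite subsets of `ℕ`. -/
def compVerts (S : Set (Finset ℕ)) (C : (quarkicGraph S).ConnectedComponent) :
    Set (Finset ℕ) :=
  Subtype.val '' C.supp

/-- The pairing graph of `S` (for `S` with quarks of size at most 2): vertices are `ℕ`,
with an edge between distinct `a`, `b` whenever `{a, b}` is a quark of `S`. -/
def pairingGraph (S : Set (Finset ℕ)) : SimpleGraph ℕ :=
  SimpleGraph.fromRel (fun a b => IsQuark S {a, b})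

/-- The edge set of a connected component `C` of the pairing graph, each edge `{a,b}`
regarded as the 2-element subset `{a, b}` of `ℕ`. -/
def compEdgeSets (S : Set (Finset ℕ)) (C : (pairingGraph S).ConnectedComponent) :
    Set (Finset ℕ) :=
  {A | ∃ a b : ℕ, (pairingGraph S).Adj a b ∧ a ∈ C.supp ∧ A = {a, b}}

/-- `v` has degree at least `n` in `G` (valid also for infinite graphs). -/
def DegAtLeast {V : Type*} (G : SimpleGraph V) (v : V) (n : ℕ) : Prop :=
  ∃ s : Finset V, s.card = n ∧ ∀ u ∈ s, G.Adj v u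

/-- `v` has degree exactly `n` in `G`: its neighbor set is a finite set of size `n`. -/
def DegExactly {V : Type*} (G : SimpleGraph V) (v : V) (n : ℕ) : Prop :=
  ∃ s : Finset V, s.card = n ∧ ∀ u, G.Adj v u ↔ u ∈ s

/-- A leaf: a vertex of degree exactly 1. -/
def IsLeaf {V : Type*} (G : SimpleGraph V) (v : V) : Prop := DegExactly G v 1

/-- A candy graph: a connected simple graph of diameter at most 4 that contains a
cycle of length `k` if and only if `k = 4`. -/
def IsCandy {V : Type*} (G : SimpleGraph V) : Prop :=
  G.Connected ∧
  (∀ u v : V, ∃ p : G.Walk u v, p.length ≤ 4) ∧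
  (∀ k : ℕ, (∃ (v : V) (c : G.Walk v v), c.IsCycle ∧ c.length = k) ↔ k = 4)

/-- The connected component `C` of `G` contains no cycle. -/
def CompAcyclic {V : Type*} (G : SimpleGraph V) (C : G.ConnectedComponent) : Prop :=
  ∀ v ∈ C.supp, ∀ c : G.Walk v v, ¬ c.IsCycle

/-- Every path inside the connected component `C` has length at most `d` (for a tree
component this says its diameter is at most `d`). -/
def CompDiamLe {V : Type*} (G : SimpleGraph V) (C : G.ConnectedComponent) (d : ℕ) : Prop :=
  ∀ (u v : V), u ∈ C.supp → ∀ p : G.Walk u v, p.IsPath → p.length ≤ d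

/-- The connected component `C` of `G` is (as an induced subgraph) the cycle graph on
`n` vertices. -/
def CompIsCycleGraph {V : Type*} (G : SimpleGraph V) (C : G.ConnectedComponent)
    (n : ℕ) : Prop :=
  ∃ v : Fin n → V, Function.Injective v ∧ C.supp = Set.range v ∧
    ∀ i j : Fin n, G.Adj (v i) (v j) ↔
      ((j : ℕ) = ((i : ℕ) + 1) % n ∨ (i : ℕ) = ((j : ℕ) + 1) % n)

/-- The connected component `C` of `G` is (as an induced subgraph) a candy graph:
it has diameter at most 4 and contains a cycle of length `k` iff `k = 4`. -/
def CompIsCandy {V : Type*} (G : SimpleGraph V) (C : G.ConnectedComponent) : Prop :=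
  (∀ u v, u ∈ C.supp → v ∈ C.supp → ∃ p : G.Walk u v, p.length ≤ 4) ∧
  (∀ k : ℕ, (∃ v ∈ C.supp, ∃ c : G.Walk v v, c.IsCycle ∧ c.length = k) ↔ k = 4)

/-- The set of factorization lengths `L(X)` of `X` in `S`. -/
def lengthsOf (S : Set (Finset ℕ)) (X : Finset ℕ) : Set ℕ :=
  Finset.card '' Factorizations S X

/-- The elasticity `ρ(X) = sup L(X) / min L(X)` of a nonempty element `X` of `S`,
valued in the extended nonnegative reals. -/
noncomputable def elasticityOf (S : Set (Finset ℕ)) (X : Finset ℕ) : ℝ≥0∞ :=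
  (⨆ n ∈ lengthsOf S X, (n : ℝ≥0∞)) / ((sInf (lengthsOf S X) : ℕ) : ℝ≥0∞)

/-- The elasticity `ρ(S)` of a Boolean sublattice `S`. -/
noncomputable def elasticity (S : Set (Finset ℕ)) : ℝ≥0∞ :=
  ⨆ X ∈ {X | X ∈ S ∧ X ≠ ∅}, elasticityOf S X

/-! ### Auxiliary material for statement 19 -/

/-- The five generators, as a finset. -/
def Q19 : Finset (Finset ℕ) := {{1,2,3}, {4,5,6}, {1,4}, {2,5}, {3,6}}

/-- The five generators, as a set. -/
def genA19 : Set (Finset ℕ) := {({1,2,3} : Finset ℕ), {4,5,6}, {1,4}, {2,5}, {3,6}}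

/-- The generated Boolean sublattice, listed explicitly. -/
def SF19 : Finset (Finset ℕ) :=
  {∅, {1,4}, {2,5}, {3,6}, {1,2,3}, {4,5,6}, {1,2,3,4}, {1,2,3,5}, {1,2,3,6},
   {1,2,4,5}, {1,3,4,6}, {1,4,5,6}, {2,3,5,6}, {2,4,5,6}, {3,4,5,6}, {1,2,3,4,5},
   {1,2,3,4,6}, {1,2,3,5,6}, {1,2,4,5,6}, {1,3,4,5,6}, {2,3,4,5,6}, {1,2,3,4,5,6}}

def S19 : Set (Finset ℕ) := ↑SF19

lemma mem_genBSL19 {𝒜 : Set (Finset ℕ)} {x : Finset ℕ} :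
    x ∈ genBSL 𝒜 ↔ ∀ T, IsBSL T ∧ 𝒜 ⊆ T → x ∈ T := by
  simp only [genBSL, Set.mem_sInter, Set.mem_setOf_eq]

lemma genBSL_isBSL19 (𝒜 : Set (Finset ℕ)) : IsBSL (genBSL 𝒜) := by
  refine ⟨mem_genBSL19.mpr fun T hT => hT.1.1, ?_⟩
  intro A hA B hB
  exact mem_genBSL19.mpr fun T hT =>
    hT.1.2 A (mem_genBSL19.mp hA T hT) B (mem_genBSL19.mp hB T hT)

lemma subset_genBSL19 (𝒜 : Set (Finset ℕ)) : 𝒜 ⊆ genBSL 𝒜 :=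
  fun x hx => mem_genBSL19.mpr fun _ hT => hT.2 hx

lemma genBSL_le19 {𝒜 T : Set (Finset ℕ)} (h1 : IsBSL T) (h2 : 𝒜 ⊆ T) :
    genBSL 𝒜 ⊆ T := fun _ hx => mem_genBSL19.mp hx T ⟨h1, h2⟩

lemma sup_mem_genBSL19 (𝒜 : Set (Finset ℕ)) (t : Finset (Finset ℕ))
    (ht : ∀ A ∈ t, A ∈ 𝒜) : t.sup id ∈ genBSL 𝒜 := by
  induction t using Finset.induction_on with
  | empty => simpa using (genBSL_isBSL19 𝒜).1
  | @insert a s _ ih =>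
    rw [Finset.sup_insert]
    exact (genBSL_isBSL19 𝒜).2 a (subset_genBSL19 𝒜 (ht a (Finset.mem_insert_self a s)))
      (s.sup id) (ih fun A hA => ht A (Finset.mem_insert_of_mem hA))

lemma S19_isBSL : IsBSL S19 := by
  constructor
  · show (∅ : Finset ℕ) ∈ SF19; decide
  · intro A hA B hB
    have key : ∀ A ∈ SF19, ∀ B ∈ SF19, A ∪ B ∈ SF19 := by decide
    exact key A hA B hB

lemma S19_eq : S19 = genBSL genA19 := by
  apply Set.Subset.antisymm
  · intro X hX
    have hX' : X ∈ SF19 := hX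
    have key : ∀ X ∈ SF19, ∃ t ∈ Q19.powerset, t.sup id = X := by decide
    obtain ⟨t, ht, rfl⟩ := key X hX'
    refine sup_mem_genBSL19 genA19 t fun A hA => ?_
    have hAQ : A ∈ Q19 := Finset.mem_powerset.mp ht hA
    simp only [Q19, Finset.mem_insert, Finset.mem_singleton] at hAQ
    simp only [genA19, Set.mem_insert_iff, Set.mem_singleton_iff]
    exact hAQ
  · refine genBSL_le19 S19_isBSL ?_
    intro A hA
    simp only [genA19, Set.mem_insert_iff, Set.mem_singleton_iff] at hA
    show A ∈ SF19
    rcases hA with rfl | rfl | rfl | rfl | rfl <;> decide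

lemma quark_iff19 (A : Finset ℕ) : IsQuark S19 A ↔ A ∈ Q19 := by
  unfold IsQuark
  constructor
  · rintro ⟨h1, h2, h3⟩
    have key : ∀ A ∈ SF19, (A ≠ ∅ ∧ ∀ B ∈ SF19, B ≠ ∅ → ¬ B ⊂ A) → A ∈ Q19 := by decide
    exact key A h1 ⟨h2, fun B hB => h3 B hB⟩
  · intro hA
    have key : ∀ A ∈ Q19, A ∈ SF19 ∧ A ≠ ∅ ∧ ∀ B ∈ SF19, B ≠ ∅ → ¬ B ⊂ A := by decide
    obtain ⟨k1, k2, k3⟩ := key A hA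
    exact ⟨k1, k2, fun B hB => k3 B hB⟩

lemma fact_iff19 (X : Finset ℕ) (z : Finset (Finset ℕ)) :
    IsFactorization S19 X z ↔
      (z ∈ Q19.powerset ∧ z.sup id = X ∧ ∀ w ∈ z.powerset, w ≠ z → w.sup id ≠ X) := by
  unfold IsFactorization
  constructor
  · rintro ⟨h1, h2, h3⟩
    refine ⟨Finset.mem_powerset.mpr fun A hA => (quark_iff19 A).mp (h1 A hA), h2, ?_⟩
    intro w hw hne
    exact h3 w (lt_of_le_of_ne (Finset.mem_powerset.mp hw) hne)
  · rintro ⟨h1, h2, h3⟩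
    refine ⟨fun A hA => (quark_iff19 A).mpr (Finset.mem_powerset.mp h1 hA), h2, ?_⟩
    intro w hw
    exact h3 w (Finset.mem_powerset.mpr hw.subset) (ne_of_lt hw)

/-- The Boolean sublattice generated by `{1,2,3}, {4,5,6}, {1,4}, {2,5},
{3,6}` is factorizable, its quarks are exactly these five sets, every nonempty element
other than `{1,…,6}` has a unique factorization, and `{1,…,6}` has exactly the two
factorizations `{{1,2,3},{4,5,6}}` (length 2) and `{{1,4},{2,5},{3,6}}` (length 3);
hence it is an LFS that is not a UFS. -/
theorem stmt_19 :
    ∃ S : Set (Finset ℕ),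
      S = genBSL {({1,2,3} : Finset ℕ), {4,5,6}, {1,4}, {2,5}, {3,6}} ∧
      Factorizable S ∧
      {A | IsQuark S A} = {({1,2,3} : Finset ℕ), {4,5,6}, {1,4}, {2,5}, {3,6}} ∧
      (∀ X ∈ S, X ≠ ∅ → X ≠ ({1,2,3,4,5,6} : Finset ℕ) →
        ∃! z, z ∈ Factorizations S X) ∧
      Factorizations S ({1,2,3,4,5,6} : Finset ℕ) =
        {({({1,2,3} : Finset ℕ), {4,5,6}} : Finset (Finset ℕ)),
         ({({1,4} : Finset ℕ), {2,5}, {3,6}} : Finset (Finset ℕ))} ∧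
      (({({1,2,3} : Finset ℕ), {4,5,6}} : Finset (Finset ℕ))).card = 2 ∧
      (({({1,4} : Finset ℕ), {2,5}, {3,6}} : Finset (Finset ℕ))).card = 3 ∧
      IsLFS S ∧ ¬ IsUFS S := by
  refine ⟨S19, S19_eq, ?_, ?_, ?_, ?_, by decide, by decide, ?_, ?_⟩
  · -- Factorizable
    intro X hX hne
    have hX' : X ∈ SF19 := hX
    have key : ∀ X ∈ SF19, X ≠ ∅ →
        ∃ z ∈ Q19.powerset, z.sup id = X ∧ ∀ w ∈ z.powerset, w ≠ z → w.sup id ≠ X := by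
      decide
    obtain ⟨z, hz1, hz2, hz3⟩ := key X hX' hne
    exact ⟨z, (fact_iff19 X z).mpr ⟨hz1, hz2, hz3⟩⟩
  · -- quark set
    ext A
    simp only [Set.mem_setOf_eq, quark_iff19, Q19, Finset.mem_insert, Finset.mem_singleton,
      Set.mem_insert_iff, Set.mem_singleton_iff]
  · -- unique factorization away from the top
    intro X hX hne hfull
    have hX' : X ∈ SF19 := hX
    have key : ∀ X ∈ SF19, X ≠ ∅ → X ≠ ({1,2,3,4,5,6} : Finset ℕ) →
        ∃ z ∈ Q19.powerset, (z.sup id = X ∧ ∀ w ∈ z.powerset, w ≠ z → w.sup id ≠ X) ∧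
          ∀ z' ∈ Q19.powerset,
            (z'.sup id = X ∧ ∀ w ∈ z'.powerset, w ≠ z' → w.sup id ≠ X) → z' = z := by
      decide
    obtain ⟨z, hz1, hz2, hz3⟩ := key X hX' hne hfull
    refine ⟨z, (fact_iff19 X z).mpr ⟨hz1, hz2.1, hz2.2⟩, ?_⟩
    intro z' hz'
    obtain ⟨h1, h2, h3⟩ := (fact_iff19 X z').mp hz'
    exact hz3 z' h1 ⟨h2, h3⟩
  · -- factorizations of the top element
    ext z
    simp only [Factorizations, Set.mem_setOf_eq, fact_iff19, Set.mem_insert_iff,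
      Set.mem_singleton_iff]
    constructor
    · rintro ⟨h1, h2, h3⟩
      have key : ∀ z ∈ Q19.powerset,
          (z.sup id = ({1,2,3,4,5,6} : Finset ℕ) ∧
            ∀ w ∈ z.powerset, w ≠ z → w.sup id ≠ ({1,2,3,4,5,6} : Finset ℕ)) →
          (z = ({({1,2,3} : Finset ℕ), {4,5,6}} : Finset (Finset ℕ)) ∨
           z = ({({1,4} : Finset ℕ), {2,5}, {3,6}} : Finset (Finset ℕ))) := by decide
      exact key z h1 ⟨h2, h3⟩
    · rintro (rfl | rfl) <;> refine ⟨by decide, by decide, ?_⟩ <;> decide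
  · -- LFS
    intro X hX hne z hz z' hz' hcard
    obtain ⟨h1, h2, h3⟩ := (fact_iff19 X z).mp hz
    obtain ⟨h1', h2', h3'⟩ := (fact_iff19 X z').mp hz'
    have key : ∀ z ∈ Q19.powerset, ∀ z' ∈ Q19.powerset,
        z.sup id = z'.sup id →
        (∀ w ∈ z.powerset, w ≠ z → w.sup id ≠ z.sup id) →
        (∀ w ∈ z'.powerset, w ≠ z' → w.sup id ≠ z'.sup id) →
        z.card = z'.card → z = z' := by decide
    exact key z h1 z' h1' (by rw [h2, h2']) (h2 ▸ h3) (h2' ▸ h3') hcard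
  · -- not UFS
    intro h
    have htop : ({1,2,3,4,5,6} : Finset ℕ) ∈ S19 := by
      show ({1,2,3,4,5,6} : Finset ℕ) ∈ SF19; decide
    obtain ⟨z, _, huniq⟩ := h ({1,2,3,4,5,6} : Finset ℕ) htop (by decide)
    have m1 : ({({1,2,3} : Finset ℕ), {4,5,6}} : Finset (Finset ℕ)) ∈
        Factorizations S19 ({1,2,3,4,5,6} : Finset ℕ) :=
      (fact_iff19 _ _).mpr (by refine ⟨by decide, by decide, ?_⟩; decide)
    have m2 : ({({1,4} : Finset ℕ), {2,5}, {3,6}} : Finset (Finset ℕ)) ∈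
        Factorizations S19 ({1,2,3,4,5,6} : Finset ℕ) :=
      (fact_iff19 _ _).mpr (by refine ⟨by decide, by decide, ?_⟩; decide)
    have e1 := huniq _ m1
    have e2 := huniq _ m2
    rw [← e2] at e1
    exact absurd e1 (by decide)
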